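/- Let σ(β, s, l) = e^{-l}|ψ⟩⟨ψ| + e^{-(l-s)}(1-e^{-s})·(I/2)⊗ψ^B + (1-e^{-(l-s)})e^{-s}·ψ^A⊗(I/2) + (1-e^{-(l-s)})(1-e^{-s})·(I/2)⊗(I/2), where |ψ⟩ = cos β|00⟩ + sin β|11⟩. Then for l = ln 3 and every s ∈ [0, ln 3] and every β, det(σ^{T_A}) ≥ 0; in particular det(σ^{T_A}) = (e^{-4s} cos² 2β / 20736)·(f(s)² - f(s)(3+e^{2s})² sin² 2β) with f(s) = 9 - 10e^{2s} + e^{4s}, and f(s) ≤ 0 for s ∈ [0, ln 3]. -/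
import Mathlib


open Real Matrix
open scoped Kronecker

/-- The vector `|ψ⟩ = cos β |00⟩ + sin β |11⟩`. -/
noncomputable def psiVec (β : ℝ) : Fin 2 × Fin 2 → ℝ := fun p =>
  if p = (0, 0) then Real.cos β else if p = (1, 1) then Real.sin β else 0

/-- The projector `|ψ⟩⟨ψ|`. -/
noncomputable def psiProj (β : ℝ) : Matrix (Fin 2 × Fin 2) (Fin 2 × Fin 2) ℝ :=
  Matrix.of fun p q => psiVec β p * psiVec β q

/-- The reduced state of `|ψ⟩⟨ψ|` on either qubit: `diag(cos² β, sin² β)`. -/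
noncomputable def psiRed (β : ℝ) : Matrix (Fin 2) (Fin 2) ℝ :=
  Matrix.diagonal ![Real.cos β ^ 2, Real.sin β ^ 2]

/-- The maximally mixed single-qubit state `I/2`. -/
noncomputable def half : Matrix (Fin 2) (Fin 2) ℝ := (1 / 2 : ℝ) • (1 : Matrix (Fin 2) (Fin 2) ℝ)

/-- The two-qubit state
`σ(β,s,l) = e^{-l}|ψ⟩⟨ψ| + e^{-(l-s)}(1-e^{-s}) (I/2)⊗ψ^B + (1-e^{-(l-s)})e^{-s} ψ^A⊗(I/2)
 + (1-e^{-(l-s)})(1-e^{-s}) (I/2)⊗(I/2)`. -/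
noncomputable def sigmaState (β s l : ℝ) : Matrix (Fin 2 × Fin 2) (Fin 2 × Fin 2) ℝ :=
  Real.exp (-l) • psiProj β
    + (Real.exp (-(l - s)) * (1 - Real.exp (-s))) • (half ⊗ₖ psiRed β)
    + ((1 - Real.exp (-(l - s))) * Real.exp (-s)) • (psiRed β ⊗ₖ half)
    + ((1 - Real.exp (-(l - s))) * (1 - Real.exp (-s))) • (half ⊗ₖ half)

/-- Partial transpose on the first qubit. -/
def ptA (M : Matrix (Fin 2 × Fin 2) (Fin 2 × Fin 2) ℝ) :
    Matrix (Fin 2 × Fin 2) (Fin 2 × Fin 2) ℝ :=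
  Matrix.of fun p q => M (q.1, p.2) (p.1, q.2)

/-- `f(s) = 9 - 10 e^{2s} + e^{4s}`. -/
noncomputable def fAux (s : ℝ) : ℝ := 9 - 10 * Real.exp (2 * s) + Real.exp (4 * s)

set_option maxHeartbeats 2000000 in
theorem detFour {R : Type*} [CommRing R] (A : Matrix (Fin 4) (Fin 4) R) :
    A.det =
      A 0 0 * (A 1 1 * (A 2 2 * A 3 3 - A 2 3 * A 3 2) - A 1 2 * (A 2 1 * A 3 3 - A 2 3 * A 3 1) + A 1 3 * (A 2 1 * A 3 2 - A 2 2 * A 3 1))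
    - A 0 1 * (A 1 0 * (A 2 2 * A 3 3 - A 2 3 * A 3 2) - A 1 2 * (A 2 0 * A 3 3 - A 2 3 * A 3 0) + A 1 3 * (A 2 0 * A 3 2 - A 2 2 * A 3 0))
    + A 0 2 * (A 1 0 * (A 2 1 * A 3 3 - A 2 3 * A 3 1) - A 1 1 * (A 2 0 * A 3 3 - A 2 3 * A 3 0) + A 1 3 * (A 2 0 * A 3 1 - A 2 1 * A 3 0))
    - A 0 3 * (A 1 0 * (A 2 1 * A 3 2 - A 2 2 * A 3 1) - A 1 1 * (A 2 0 * A 3 2 - A 2 2 * A 3 0) + A 1 2 * (A 2 0 * A 3 1 - A 2 1 * A 3 0)) := by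
  simp only [det_succ_row_zero, det_fin_three, Fin.sum_univ_succ, Fin.sum_univ_zero,
    submatrix_apply, Fin.succ_zero_eq_one, Fin.succ_one_eq_two]
  norm_num [Fin.succAbove, Fin.lt_def, Fin.succ, Fin.castSucc, Fin.castAdd, Fin.castLE,
    show (⟨2, by norm_num⟩ : Fin 4) = 2 from rfl, show (⟨3, by norm_num⟩ : Fin 4) = 3 from rfl,
    show ((3 : Fin 4) : ℕ) = 3 from rfl]
  ring


set_option maxHeartbeats 4000000 in
set_option maxRecDepth 100000 in
/-- For `l = ln 3` and every `s ∈ [0, ln 3]` and every `β`, the determinant of the partial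
transpose of `σ(β,s,l)` is given by the stated closed formula, `f(s) ≤ 0` there, and
`det(σ^{T_A}) ≥ 0`; hence the state is PPT (separable) for `l = ln 3`. -/
theorem sigma_ppt_at_log_three (β s : ℝ) (hs0 : 0 ≤ s) (hs1 : s ≤ Real.log 3) :
    (ptA (sigmaState β s (Real.log 3))).det =
      Real.exp (-(4 * s)) * Real.cos (2 * β) ^ 2 / 20736 *
        ((fAux s) ^ 2 - fAux s * (3 + Real.exp (2 * s)) ^ 2 * Real.sin (2 * β) ^ 2) ∧
    fAux s ≤ 0 ∧
    0 ≤ (ptA (sigmaState β s (Real.log 3))).det := by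
  have h1 : Real.sin β ^ 2 + Real.cos β ^ 2 = 1 := Real.sin_sq_add_cos_sq β
  have h2 : Real.exp (-s) * Real.exp s = 1 := by
    rw [← Real.exp_add]; simp
  have E1 : Real.exp (-Real.log 3) = 1 / 3 := by
    rw [Real.exp_neg, Real.exp_log] <;> norm_num
  have E2 : Real.exp (-(Real.log 3 - s)) = Real.exp s / 3 := by
    rw [neg_sub, Real.exp_sub, Real.exp_log] <;> norm_num
  have E2' : Real.exp (s - Real.log 3) = Real.exp s / 3 := by
    rw [Real.exp_sub, Real.exp_log] <;> norm_num
  have E3 : Real.exp (-(4 * s)) = Real.exp (-s) ^ 4 := by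
    rw [show (-(4 * s)) = ((4 : ℕ) * (-s)) by push_cast; ring, Real.exp_nat_mul]
  have E4 : Real.exp (2 * s) = Real.exp s ^ 2 := by
    rw [show ((2 : ℝ) * s) = ((2 : ℕ) * s) by push_cast; ring, Real.exp_nat_mul]
  have E5 : Real.exp (4 * s) = Real.exp s ^ 4 := by
    rw [show ((4 : ℝ) * s) = ((4 : ℕ) * s) by push_cast; ring, Real.exp_nat_mul]
  have hdet : (ptA (sigmaState β s (Real.log 3))).det =
      Real.exp (-(4 * s)) * Real.cos (2 * β) ^ 2 / 20736 *
        ((fAux s) ^ 2 - fAux s * (3 + Real.exp (2 * s)) ^ 2 * Real.sin (2 * β) ^ 2) := by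
    have g0 : (finProdFinEquiv (m := 2) (n := 2)).symm 0 = (0, 0) := by decide
    have g1 : (finProdFinEquiv (m := 2) (n := 2)).symm 1 = (0, 1) := by decide
    have g2 : (finProdFinEquiv (m := 2) (n := 2)).symm 2 = (1, 0) := by decide
    have g3 : (finProdFinEquiv (m := 2) (n := 2)).symm 3 = (1, 1) := by decide
    rw [← Matrix.det_submatrix_equiv_self (finProdFinEquiv (m := 2) (n := 2)).symm]
    rw [detFour]
    simp only [Matrix.submatrix_apply, g0, g1, g2, g3]
    simp only [ptA, Matrix.of_apply]
    simp only [sigmaState, psiProj, psiVec, psiRed, half,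
      Matrix.of_apply, Matrix.add_apply, Matrix.smul_apply, Matrix.kroneckerMap_apply,
      Matrix.diagonal_apply, Matrix.one_apply, smul_eq_mul, fAux,
      Real.cos_two_mul, Real.sin_two_mul]
    norm_num [E1, E2, E2', E3, E4, E5]
    linear_combination (((-1 : ℝ)/27) + ((25 : ℝ)/1296) * Real.exp s + ((-1 : ℝ)/162) * Real.exp s ^ 2 + ((1 : ℝ)/1296) * Real.exp s ^ 3 + ((143 : ℝ)/2592) * Real.sin β ^ 2 + ((-43 : ℝ)/1728) * Real.sin β ^ 2 * Real.exp s + ((5 : ℝ)/648) * Real.sin β ^ 2 * Real.exp s ^ 2 + ((-1 : ℝ)/576) * Real.sin β ^ 2 * Real.exp s ^ 3 + ((1 : ℝ)/5184) * Real.sin β ^ 2 * Real.exp s ^ 4 + ((-1 : ℝ)/54) * Real.sin β ^ 4 + ((25 : ℝ)/2592) * Real.sin β ^ 4 * Real.exp s + ((-1 : ℝ)/324) * Real.sin β ^ 4 * Real.exp s ^ 2 + ((1 : ℝ)/2592) * Real.sin β ^ 4 * Real.exp s ^ 3 + ((7 : ℝ)/216) * Real.cos β ^ 2 + ((-43 :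 ℝ)/1728) * Real.cos β ^ 2 * Real.exp s + ((5 : ℝ)/432) * Real.cos β ^ 2 * Real.exp s ^ 2 + ((-1 : ℝ)/576) * Real.cos β ^ 2 * Real.exp s ^ 3 + ((-1 : ℝ)/24) * Real.cos β ^ 2 * Real.sin β ^ 2 + ((29 : ℝ)/1296) * Real.cos β ^ 2 * Real.sin β ^ 2 * Real.exp s + ((-1 : ℝ)/108) * Real.cos β ^ 2 * Real.sin β ^ 2 * Real.exp s ^ 2 + ((5 : ℝ)/1296) * Real.cos β ^ 2 * Real.sin β ^ 2 * Real.exp s ^ 3 + ((-1 : ℝ)/1296) * Real.cos β ^ 2 * Real.sin β ^ 2 * Real.exp s ^ 4 + ((1 : ℝ)/54) * Real.cos β ^ 2 * Real.sin β ^ 4 + ((-1 : ℝ)/144) * Real.cos β ^ 2 * Real.sin β ^ 4 * Real.exp s + ((1 : ℝ)/324) * Real.cos β ^ 2 * Real.sin β ^ 4 * Real.exp s ^ 2 + ((-1 : ℝ)/1296) * Real.cos β ^ 2 * Real.sin β ^ 4 * Real.exp s ^ 3 + ((-1 : ℝ)/54) * Real.cos β ^ 4 + ((25 : ℝ)/2592)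 * Real.cos β ^ 4 * Real.exp s + ((-1 : ℝ)/324) * Real.cos β ^ 4 * Real.exp s ^ 2 + ((1 : ℝ)/2592) * Real.cos β ^ 4 * Real.exp s ^ 3 + ((-1 : ℝ)/72) * Real.cos β ^ 4 * Real.sin β ^ 2 + ((-1 : ℝ)/144) * Real.cos β ^ 4 * Real.sin β ^ 2 * Real.exp s + ((-1 : ℝ)/1296) * Real.cos β ^ 4 * Real.sin β ^ 2 * Real.exp s ^ 3 + ((1 : ℝ)/1296) * Real.cos β ^ 4 * Real.sin β ^ 2 * Real.exp s ^ 4 + ((25 : ℝ)/432) * Real.exp (-s) + ((-43 : ℝ)/576) * Real.exp (-s) * Real.sin β ^ 2 + ((25 : ℝ)/864) * Real.exp (-s) * Real.sin β ^ 4 + ((-43 : ℝ)/576) * Real.exp (-s) * Real.cos β ^ 2 + ((29 : ℝ)/432) * Real.exp (-s) * Real.cos β ^ 2 * Real.sin β ^ 2 + ((-1 : ℝ)/48) * Real.exp (-s) * Real.cos β ^ 2 * Real.sin β ^ 4 + ((25 : ℝ)/864) * Real.exp (-s) * Real.cos β ^ 4 + ((-1 : ℝ)/48) * Real.exp (-s)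 * Real.cos β ^ 4 * Real.sin β ^ 2 + ((-1 : ℝ)/18) * Real.exp (-s) ^ 2 + ((5 : ℝ)/72) * Real.exp (-s) ^ 2 * Real.sin β ^ 2 + ((-1 : ℝ)/36) * Real.exp (-s) ^ 2 * Real.sin β ^ 4 + ((5 : ℝ)/48) * Real.exp (-s) ^ 2 * Real.cos β ^ 2 + ((-1 : ℝ)/12) * Real.exp (-s) ^ 2 * Real.cos β ^ 2 * Real.sin β ^ 2 + ((1 : ℝ)/36) * Real.exp (-s) ^ 2 * Real.cos β ^ 2 * Real.sin β ^ 4 + ((-1 : ℝ)/36) * Real.exp (-s) ^ 2 * Real.cos β ^ 4 + ((1 : ℝ)/48) * Real.exp (-s) ^ 3 + ((-3 : ℝ)/64) * Real.exp (-s) ^ 3 * Real.sin β ^ 2 + ((1 : ℝ)/96) * Real.exp (-s) ^ 3 * Real.sin β ^ 4 + ((-3 : ℝ)/64) * Real.exp (-s) ^ 3 * Real.cos β ^ 2 + ((5 : ℝ)/48) * Real.exp (-s) ^ 3 * Real.cos β ^ 2 * Real.sin β ^ 2 + ((-1 : ℝ)/48) * Real.exp (-s) ^ 3 * Real.cos β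 ^ 2 * Real.sin β ^ 4 + ((1 : ℝ)/96) * Real.exp (-s) ^ 3 * Real.cos β ^ 4 + ((-1 : ℝ)/48) * Real.exp (-s) ^ 3 * Real.cos β ^ 4 * Real.sin β ^ 2 + ((1 : ℝ)/64) * Real.exp (-s) ^ 4 * Real.sin β ^ 2 + ((-1 : ℝ)/16) * Real.exp (-s) ^ 4 * Real.cos β ^ 2 * Real.sin β ^ 2 + ((1 : ℝ)/16) * Real.exp (-s) ^ 4 * Real.cos β ^ 4 * Real.sin β ^ 2) * h1 + (((229 : ℝ)/6912) + ((-73 : ℝ)/5184) * Real.exp s + ((37 : ℝ)/10368) * Real.exp s ^ 2 + ((-1 : ℝ)/5184) * Real.exp s ^ 3 + ((-1 : ℝ)/20736) * Real.exp s ^ 4 + ((-505 : ℝ)/5184) * Real.sin β ^ 2 + ((229 : ℝ)/5184) * Real.sin β ^ 2 * Real.exp s + ((-1 : ℝ)/96) * Real.sin β ^ 2 * Real.exp s ^ 2 + ((5 : ℝ)/5184) * Real.sin β ^ 2 * Real.exp s ^ 3 + ((191 : ℝ)/2592) * Real.sin β ^ 4 + ((-197 : ℝ)/5184) * Real.sin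 β ^ 4 * Real.exp s + ((59 : ℝ)/5184) * Real.sin β ^ 4 * Real.exp s ^ 2 + ((-7 : ℝ)/5184) * Real.sin β ^ 4 * Real.exp s ^ 3 + ((-1 : ℝ)/54) * Real.sin β ^ 6 + ((25 : ℝ)/2592) * Real.sin β ^ 6 * Real.exp s + ((-1 : ℝ)/324) * Real.sin β ^ 6 * Real.exp s ^ 2 + ((1 : ℝ)/2592) * Real.sin β ^ 6 * Real.exp s ^ 3 + ((-43 : ℝ)/576) * Real.cos β ^ 2 + ((229 : ℝ)/5184) * Real.cos β ^ 2 * Real.exp s + ((-37 : ℝ)/2592) * Real.cos β ^ 2 * Real.exp s ^ 2 + ((5 : ℝ)/5184) * Real.cos β ^ 2 * Real.exp s ^ 3 + ((1 : ℝ)/5184) * Real.cos β ^ 2 * Real.exp s ^ 4 + ((335 : ℝ)/2592) * Real.cos β ^ 2 * Real.sin β ^ 2 + ((-223 : ℝ)/2592) * Real.cos β ^ 2 * Real.sin β ^ 2 * Real.exp s + ((5 : ℝ)/162) * Real.cos β ^ 2 * Real.sin β ^ 2 * Real.exp s ^ 2 + ((-11 : ℝ)/2592) * Real.cos β ^ 2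 * Real.sin β ^ 2 * Real.exp s ^ 3 + ((1 : ℝ)/5184) * Real.cos β ^ 2 * Real.sin β ^ 2 * Real.exp s ^ 4 + ((-5 : ℝ)/72) * Real.cos β ^ 2 * Real.sin β ^ 4 + ((31 : ℝ)/864) * Real.cos β ^ 2 * Real.sin β ^ 4 * Real.exp s + ((-29 : ℝ)/1296) * Real.cos β ^ 2 * Real.sin β ^ 4 * Real.exp s ^ 2 + ((13 : ℝ)/2592) * Real.cos β ^ 2 * Real.sin β ^ 4 * Real.exp s ^ 3 + ((1 : ℝ)/54) * Real.cos β ^ 2 * Real.sin β ^ 6 + ((-1 : ℝ)/144) * Real.cos β ^ 2 * Real.sin β ^ 6 * Real.exp s + ((1 : ℝ)/324) * Real.cos β ^ 2 * Real.sin β ^ 6 * Real.exp s ^ 2 + ((-1 : ℝ)/1296) * Real.cos β ^ 2 * Real.sin β ^ 6 * Real.exp s ^ 3 + ((11 : ℝ)/216) * Real.cos β ^ 4 + ((-197 : ℝ)/5184) * Real.cos β ^ 4 * Real.exp s + ((79 : ℝ)/5184) * Real.cos β ^ 4 * Real.exp s ^ 2 + ((-7 : ℝ)/5184) * Real.cos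 β ^ 4 * Real.exp s ^ 3 + ((-1 : ℝ)/5184) * Real.cos β ^ 4 * Real.exp s ^ 4 + ((-1 : ℝ)/27) * Real.cos β ^ 4 * Real.sin β ^ 2 + ((31 : ℝ)/864) * Real.cos β ^ 4 * Real.sin β ^ 2 * Real.exp s + ((-25 : ℝ)/1296) * Real.cos β ^ 4 * Real.sin β ^ 2 * Real.exp s ^ 2 + ((13 : ℝ)/2592) * Real.cos β ^ 4 * Real.sin β ^ 2 * Real.exp s ^ 3 + ((-1 : ℝ)/1296) * Real.cos β ^ 4 * Real.sin β ^ 2 * Real.exp s ^ 4 + ((11 : ℝ)/648) * Real.cos β ^ 4 * Real.sin β ^ 4 + ((-1 : ℝ)/648) * Real.cos β ^ 4 * Real.sin β ^ 4 * Real.exp s + ((1 : ℝ)/324) * Real.cos β ^ 4 * Real.sin β ^ 4 * Real.exp s ^ 2 + ((-1 : ℝ)/216) * Real.cos β ^ 4 * Real.sin β ^ 4 * Real.exp s ^ 3 + ((-1 : ℝ)/54) * Real.cos β ^ 6 + ((25 : ℝ)/2592) * Real.cos β ^ 6 * Real.exp s + ((-1 : ℝ)/324) * Real.cos β ^ 6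 * Real.exp s ^ 2 + ((1 : ℝ)/2592) * Real.cos β ^ 6 * Real.exp s ^ 3 + ((-1 : ℝ)/72) * Real.cos β ^ 6 * Real.sin β ^ 2 + ((-1 : ℝ)/144) * Real.cos β ^ 6 * Real.sin β ^ 2 * Real.exp s + ((-1 : ℝ)/1296) * Real.cos β ^ 6 * Real.sin β ^ 2 * Real.exp s ^ 3 + ((1 : ℝ)/1296) * Real.cos β ^ 6 * Real.sin β ^ 2 * Real.exp s ^ 4 + ((-73 : ℝ)/1728) * Real.exp (-s) + ((85 : ℝ)/6912) * Real.exp (-s) * Real.exp s + ((-19 : ℝ)/5184) * Real.exp (-s) * Real.exp s ^ 2 + ((13 : ℝ)/10368) * Real.exp (-s) * Real.exp s ^ 3 + ((-1 : ℝ)/20736) * Real.exp (-s) * Real.exp s ^ 5 + ((229 : ℝ)/1728) * Real.exp (-s) * Real.sin β ^ 2 + ((-185 : ℝ)/2592) * Real.exp (-s) * Real.sin β ^ 2 * Real.exp s + ((47 : ℝ)/2592) * Real.exp (-s) * Real.sin β ^ 2 * Real.exp s ^ 2 + ((-1 : ℝ)/576) * Real.exp (-s) * Real.sin β ^ 2 *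 Real.exp s ^ 3 + ((-197 : ℝ)/1728) * Real.exp (-s) * Real.sin β ^ 4 + ((409 : ℝ)/5184) * Real.exp (-s) * Real.sin β ^ 4 * Real.exp s + ((-67 : ℝ)/2592) * Real.exp (-s) * Real.sin β ^ 4 * Real.exp s ^ 2 + ((1 : ℝ)/324) * Real.exp (-s) * Real.sin β ^ 4 * Real.exp s ^ 3 + ((25 : ℝ)/864) * Real.exp (-s) * Real.sin β ^ 6 + ((-11 : ℝ)/432) * Real.exp (-s) * Real.sin β ^ 6 * Real.exp s + ((7 : ℝ)/648) * Real.exp (-s) * Real.sin β ^ 6 * Real.exp s ^ 2 + ((-1 : ℝ)/648) * Real.exp (-s) * Real.sin β ^ 6 * Real.exp s ^ 3 + ((229 : ℝ)/1728) * Real.exp (-s) * Real.cos β ^ 2 + ((-7 : ℝ)/144) * Real.exp (-s) * Real.cos β ^ 2 * Real.exp s + ((47 : ℝ)/2592) * Real.exp (-s) * Real.cos β ^ 2 * Real.exp s ^ 2 + ((-29 : ℝ)/5184) * Real.exp (-s) * Real.cos β ^ 2 * Real.exp s ^ 3 + ((1 : ℝ)/5184) * Real.exp (-s) * Real.cos β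 ^ 2 * Real.exp s ^ 5 + ((-223 : ℝ)/864) * Real.exp (-s) * Real.cos β ^ 2 * Real.sin β ^ 2 + ((235 : ℝ)/1296) * Real.exp (-s) * Real.cos β ^ 2 * Real.sin β ^ 2 * Real.exp s + ((-89 : ℝ)/1296) * Real.exp (-s) * Real.cos β ^ 2 * Real.sin β ^ 2 * Real.exp s ^ 2 + ((7 : ℝ)/864) * Real.exp (-s) * Real.cos β ^ 2 * Real.sin β ^ 2 * Real.exp s ^ 3 + ((1 : ℝ)/5184) * Real.exp (-s) * Real.cos β ^ 2 * Real.sin β ^ 2 * Real.exp s ^ 5 + ((31 : ℝ)/288) * Real.exp (-s) * Real.cos β ^ 2 * Real.sin β ^ 4 + ((-131 : ℝ)/1296) * Real.exp (-s) * Real.cos β ^ 2 * Real.sin β ^ 4 * Real.exp s + ((1 : ℝ)/16) * Real.exp (-s) * Real.cos β ^ 2 * Real.sin β ^ 4 * Real.exp s ^ 2 + ((-1 : ℝ)/81) * Real.exp (-s) * Real.cos β ^ 2 * Real.sin β ^ 4 * Real.exp s ^ 3 + ((-1 : ℝ)/48) * Real.exp (-s) * Real.cos β ^ 2 * Real.sin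 β ^ 6 + ((1 : ℝ)/108) * Real.exp (-s) * Real.cos β ^ 2 * Real.sin β ^ 6 * Real.exp s + ((-17 : ℝ)/1296) * Real.exp (-s) * Real.cos β ^ 2 * Real.sin β ^ 6 * Real.exp s ^ 2 + ((5 : ℝ)/1296) * Real.exp (-s) * Real.cos β ^ 2 * Real.sin β ^ 6 * Real.exp s ^ 3 + ((-197 : ℝ)/1728) * Real.exp (-s) * Real.cos β ^ 4 + ((97 : ℝ)/1728) * Real.exp (-s) * Real.cos β ^ 4 * Real.exp s + ((-67 : ℝ)/2592) * Real.exp (-s) * Real.cos β ^ 4 * Real.exp s ^ 2 + ((1 : ℝ)/144) * Real.exp (-s) * Real.cos β ^ 4 * Real.exp s ^ 3 + ((-1 : ℝ)/5184) * Real.exp (-s) * Real.cos β ^ 4 * Real.exp s ^ 5 + ((31 : ℝ)/288) * Real.exp (-s) * Real.cos β ^ 4 * Real.sin β ^ 2 + ((-89 : ℝ)/1296) * Real.exp (-s) * Real.cos β ^ 4 * Real.sin β ^ 2 * Real.exp s + ((1 : ℝ)/16) * Real.exp (-s) * Real.cos β ^ 4 * Real.sin β ^ 2 * Real.exp s ^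 2 + ((-1 : ℝ)/108) * Real.exp (-s) * Real.cos β ^ 4 * Real.sin β ^ 2 * Real.exp s ^ 3 + ((-1 : ℝ)/1296) * Real.exp (-s) * Real.cos β ^ 4 * Real.sin β ^ 2 * Real.exp s ^ 5 + ((-1 : ℝ)/216) * Real.exp (-s) * Real.cos β ^ 4 * Real.sin β ^ 4 + ((7 : ℝ)/648) * Real.exp (-s) * Real.cos β ^ 4 * Real.sin β ^ 4 * Real.exp s + ((-11 : ℝ)/648) * Real.exp (-s) * Real.cos β ^ 4 * Real.sin β ^ 4 * Real.exp s ^ 2 + ((7 : ℝ)/648) * Real.exp (-s) * Real.cos β ^ 4 * Real.sin β ^ 4 * Real.exp s ^ 3 + ((25 : ℝ)/864) * Real.exp (-s) * Real.cos β ^ 6 + ((-11 : ℝ)/432) * Real.exp (-s) * Real.cos β ^ 6 * Real.exp s + ((7 : ℝ)/648) * Real.exp (-s) * Real.cos β ^ 6 * Real.exp s ^ 2 + ((-1 : ℝ)/648) * Real.exp (-s) * Real.cos β ^ 6 * Real.exp s ^ 3 + ((-1 : ℝ)/48) * Real.exp (-s) * Real.cos β ^ 6 * Real.sin β ^ 2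 + ((-5 : ℝ)/216) * Real.exp (-s) * Real.cos β ^ 6 * Real.sin β ^ 2 * Real.exp s + ((-17 : ℝ)/1296) * Real.exp (-s) * Real.cos β ^ 6 * Real.sin β ^ 2 * Real.exp s ^ 2 + ((1 : ℝ)/1296) * Real.exp (-s) * Real.cos β ^ 6 * Real.sin β ^ 2 * Real.exp s ^ 3 + ((1 : ℝ)/1296) * Real.exp (-s) * Real.cos β ^ 6 * Real.sin β ^ 2 * Real.exp s ^ 5 + ((37 : ℝ)/1152) * Real.exp (-s) ^ 2 + ((-19 : ℝ)/1728) * Real.exp (-s) ^ 2 * Real.exp s + ((-23 : ℝ)/6912) * Real.exp (-s) ^ 2 * Real.exp s ^ 2 + ((-1 : ℝ)/5184) * Real.exp (-s) ^ 2 * Real.exp s ^ 3 + ((5 : ℝ)/5184) * Real.exp (-s) ^ 2 * Real.exp s ^ 4 + ((-1 : ℝ)/20736) * Real.exp (-s) ^ 2 * Real.exp s ^ 6 + ((-3 : ℝ)/32) * Real.exp (-s) ^ 2 * Real.sin β ^ 2 + ((47 : ℝ)/864) * Real.exp (-s) ^ 2 * Real.sin β ^ 2 * Real.exp s + ((-73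 : ℝ)/5184) * Real.exp (-s) ^ 2 * Real.sin β ^ 2 * Real.exp s ^ 2 + ((7 : ℝ)/5184) * Real.exp (-s) ^ 2 * Real.sin β ^ 2 * Real.exp s ^ 3 + ((59 : ℝ)/576) * Real.exp (-s) ^ 2 * Real.sin β ^ 4 + ((-67 : ℝ)/864) * Real.exp (-s) ^ 2 * Real.sin β ^ 4 * Real.exp s + ((65 : ℝ)/2592) * Real.exp (-s) ^ 2 * Real.sin β ^ 4 * Real.exp s ^ 2 + ((-5 : ℝ)/1728) * Real.exp (-s) ^ 2 * Real.sin β ^ 4 * Real.exp s ^ 3 + ((-1 : ℝ)/36) * Real.exp (-s) ^ 2 * Real.sin β ^ 6 + ((7 : ℝ)/216) * Real.exp (-s) ^ 2 * Real.sin β ^ 6 * Real.exp s + ((-1 : ℝ)/72) * Real.exp (-s) ^ 2 * Real.sin β ^ 6 * Real.exp s ^ 2 + ((5 : ℝ)/2592) * Real.exp (-s) ^ 2 * Real.sin β ^ 6 * Real.exp s ^ 3 + ((-37 : ℝ)/288) * Real.exp (-s) ^ 2 * Real.cos β ^ 2 + ((47 : ℝ)/864) * Real.exp (-s) ^ 2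 * Real.cos β ^ 2 * Real.exp s + ((5 : ℝ)/576) * Real.exp (-s) ^ 2 * Real.cos β ^ 2 * Real.exp s ^ 2 + ((7 : ℝ)/5184) * Real.exp (-s) ^ 2 * Real.cos β ^ 2 * Real.exp s ^ 3 + ((-5 : ℝ)/1296) * Real.exp (-s) ^ 2 * Real.cos β ^ 2 * Real.exp s ^ 4 + ((1 : ℝ)/5184) * Real.exp (-s) ^ 2 * Real.cos β ^ 2 * Real.exp s ^ 6 + ((5 : ℝ)/18) * Real.exp (-s) ^ 2 * Real.cos β ^ 2 * Real.sin β ^ 2 + ((-89 : ℝ)/432) * Real.exp (-s) ^ 2 * Real.cos β ^ 2 * Real.sin β ^ 2 * Real.exp s + ((155 : ℝ)/2592) * Real.exp (-s) ^ 2 * Real.cos β ^ 2 * Real.sin β ^ 2 * Real.exp s ^ 2 + ((-7 : ℝ)/864) * Real.exp (-s) ^ 2 * Real.cos β ^ 2 * Real.sin β ^ 2 * Real.exp s ^ 3 + ((-1 : ℝ)/1296) * Real.exp (-s) ^ 2 * Real.cos β ^ 2 * Real.sin β ^ 2 * Real.exp s ^ 4 + ((1 : ℝ)/5184) * Real.exp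 (-s) ^ 2 * Real.cos β ^ 2 * Real.sin β ^ 2 * Real.exp s ^ 6 + ((-29 : ℝ)/144) * Real.exp (-s) ^ 2 * Real.cos β ^ 2 * Real.sin β ^ 4 + ((3 : ℝ)/16) * Real.exp (-s) ^ 2 * Real.cos β ^ 2 * Real.sin β ^ 4 * Real.exp s + ((-55 : ℝ)/648) * Real.exp (-s) ^ 2 * Real.cos β ^ 2 * Real.sin β ^ 4 * Real.exp s ^ 2 + ((35 : ℝ)/2592) * Real.exp (-s) ^ 2 * Real.cos β ^ 2 * Real.sin β ^ 4 * Real.exp s ^ 3 + ((1 : ℝ)/36) * Real.exp (-s) ^ 2 * Real.cos β ^ 2 * Real.sin β ^ 6 + ((-17 : ℝ)/432) * Real.exp (-s) ^ 2 * Real.cos β ^ 2 * Real.sin β ^ 6 * Real.exp s + ((19 : ℝ)/648) * Real.exp (-s) ^ 2 * Real.cos β ^ 2 * Real.sin β ^ 6 * Real.exp s ^ 2 + ((-1 : ℝ)/162) * Real.exp (-s) ^ 2 * Real.cos β ^ 2 * Real.sin β ^ 6 * Real.exp s ^ 3 + ((79 : ℝ)/576) * Real.exp (-s) ^ 2 *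 Real.cos β ^ 4 + ((-67 : ℝ)/864) * Real.exp (-s) ^ 2 * Real.cos β ^ 4 * Real.exp s + ((1 : ℝ)/432) * Real.exp (-s) ^ 2 * Real.cos β ^ 4 * Real.exp s ^ 2 + ((-5 : ℝ)/1728) * Real.exp (-s) ^ 2 * Real.cos β ^ 4 * Real.exp s ^ 3 + ((5 : ℝ)/1296) * Real.exp (-s) ^ 2 * Real.cos β ^ 4 * Real.exp s ^ 4 + ((-1 : ℝ)/5184) * Real.exp (-s) ^ 2 * Real.cos β ^ 4 * Real.exp s ^ 6 + ((-25 : ℝ)/144) * Real.exp (-s) ^ 2 * Real.cos β ^ 4 * Real.sin β ^ 2 + ((3 : ℝ)/16) * Real.exp (-s) ^ 2 * Real.cos β ^ 4 * Real.sin β ^ 2 * Real.exp s + ((-17 : ℝ)/324) * Real.exp (-s) ^ 2 * Real.cos β ^ 4 * Real.sin β ^ 2 * Real.exp s ^ 2 + ((35 : ℝ)/2592) * Real.exp (-s) ^ 2 * Real.cos β ^ 4 * Real.sin β ^ 2 * Real.exp s ^ 3 + ((1 : ℝ)/324) * Real.exp (-s) ^ 2 * Real.cos β ^ 4 * Real.sin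 β ^ 2 * Real.exp s ^ 4 + ((-1 : ℝ)/1296) * Real.exp (-s) ^ 2 * Real.cos β ^ 4 * Real.sin β ^ 2 * Real.exp s ^ 6 + ((1 : ℝ)/36) * Real.exp (-s) ^ 2 * Real.cos β ^ 4 * Real.sin β ^ 4 + ((-11 : ℝ)/216) * Real.exp (-s) ^ 2 * Real.cos β ^ 4 * Real.sin β ^ 4 * Real.exp s + ((13 : ℝ)/324) * Real.exp (-s) ^ 2 * Real.cos β ^ 4 * Real.sin β ^ 4 * Real.exp s ^ 2 + ((-1 : ℝ)/81) * Real.exp (-s) ^ 2 * Real.cos β ^ 4 * Real.sin β ^ 4 * Real.exp s ^ 3 + ((-1 : ℝ)/36) * Real.exp (-s) ^ 2 * Real.cos β ^ 6 + ((7 : ℝ)/216) * Real.exp (-s) ^ 2 * Real.cos β ^ 6 * Real.exp s + ((-1 : ℝ)/72) * Real.exp (-s) ^ 2 * Real.cos β ^ 6 * Real.exp s ^ 2 + ((5 : ℝ)/2592) * Real.exp (-s) ^ 2 * Real.cos β ^ 6 * Real.exp s ^ 3 + ((-17 : ℝ)/432) * Real.exp (-s) ^ 2 * Real.cos β ^ 6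 * Real.sin β ^ 2 * Real.exp s + ((-1 : ℝ)/324) * Real.exp (-s) ^ 2 * Real.cos β ^ 6 * Real.sin β ^ 2 * Real.exp s ^ 2 + ((-1 : ℝ)/162) * Real.exp (-s) ^ 2 * Real.cos β ^ 6 * Real.sin β ^ 2 * Real.exp s ^ 3 + ((-1 : ℝ)/324) * Real.exp (-s) ^ 2 * Real.cos β ^ 6 * Real.sin β ^ 2 * Real.exp s ^ 4 + ((1 : ℝ)/1296) * Real.exp (-s) ^ 2 * Real.cos β ^ 6 * Real.sin β ^ 2 * Real.exp s ^ 6 + ((-1 : ℝ)/192) * Real.exp (-s) ^ 3 + ((13 : ℝ)/1152) * Real.exp (-s) ^ 3 * Real.exp s + ((-1 : ℝ)/1728) * Real.exp (-s) ^ 3 * Real.exp s ^ 2 + ((-13 : ℝ)/2304) * Real.exp (-s) ^ 3 * Real.exp s ^ 3 + ((5 : ℝ)/5184) * Real.exp (-s) ^ 3 * Real.exp s ^ 5 + ((-1 : ℝ)/20736) * Real.exp (-s) ^ 3 * Real.exp s ^ 7 + ((5 : ℝ)/192) * Real.exp (-s) ^ 3 * Real.sin β ^ 2 + ((-1 : ℝ)/64)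 * Real.exp (-s) ^ 3 * Real.sin β ^ 2 * Real.exp s + ((7 : ℝ)/1728) * Real.exp (-s) ^ 3 * Real.sin β ^ 2 * Real.exp s ^ 2 + ((-1 : ℝ)/2592) * Real.exp (-s) ^ 3 * Real.sin β ^ 2 * Real.exp s ^ 3 + ((-7 : ℝ)/192) * Real.exp (-s) ^ 3 * Real.sin β ^ 4 + ((1 : ℝ)/36) * Real.exp (-s) ^ 3 * Real.sin β ^ 4 * Real.exp s + ((-5 : ℝ)/576) * Real.exp (-s) ^ 3 * Real.sin β ^ 4 * Real.exp s ^ 2 + ((5 : ℝ)/5184) * Real.exp (-s) ^ 3 * Real.sin β ^ 4 * Real.exp s ^ 3 + ((1 : ℝ)/96) * Real.exp (-s) ^ 3 * Real.sin β ^ 6 + ((-1 : ℝ)/72) * Real.exp (-s) ^ 3 * Real.sin β ^ 6 * Real.exp s + ((5 : ℝ)/864) * Real.exp (-s) ^ 3 * Real.sin β ^ 6 * Real.exp s ^ 2 + ((-1 : ℝ)/1296) * Real.exp (-s) ^ 3 * Real.sin β ^ 6 * Real.exp s ^ 3 + ((5 : ℝ)/192) * Real.exp (-s) ^ 3 * Real.cos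 β ^ 2 + ((-29 : ℝ)/576) * Real.exp (-s) ^ 3 * Real.cos β ^ 2 * Real.exp s + ((7 : ℝ)/1728) * Real.exp (-s) ^ 3 * Real.cos β ^ 2 * Real.exp s ^ 2 + ((29 : ℝ)/1296) * Real.exp (-s) ^ 3 * Real.cos β ^ 2 * Real.exp s ^ 3 + ((-5 : ℝ)/1296) * Real.exp (-s) ^ 3 * Real.cos β ^ 2 * Real.exp s ^ 5 + ((1 : ℝ)/5184) * Real.exp (-s) ^ 3 * Real.cos β ^ 2 * Real.exp s ^ 7 + ((-11 : ℝ)/96) * Real.exp (-s) ^ 3 * Real.cos β ^ 2 * Real.sin β ^ 2 + ((7 : ℝ)/96) * Real.exp (-s) ^ 3 * Real.cos β ^ 2 * Real.sin β ^ 2 * Real.exp s + ((-7 : ℝ)/288) * Real.exp (-s) ^ 3 * Real.cos β ^ 2 * Real.sin β ^ 2 * Real.exp s ^ 2 + ((-7 : ℝ)/1296) * Real.exp (-s) ^ 3 * Real.cos β ^ 2 * Real.sin β ^ 2 * Real.exp s ^ 3 + ((-1 : ℝ)/1296) * Real.exp (-s) ^ 3 * Real.cos β ^ 2 * Real.sin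 β ^ 2 * Real.exp s ^ 5 + ((1 : ℝ)/5184) * Real.exp (-s) ^ 3 * Real.cos β ^ 2 * Real.sin β ^ 2 * Real.exp s ^ 7 + ((13 : ℝ)/96) * Real.exp (-s) ^ 3 * Real.cos β ^ 2 * Real.sin β ^ 4 + ((-1 : ℝ)/9) * Real.exp (-s) ^ 3 * Real.cos β ^ 2 * Real.sin β ^ 4 * Real.exp s + ((35 : ℝ)/864) * Real.exp (-s) ^ 3 * Real.cos β ^ 2 * Real.sin β ^ 4 * Real.exp s ^ 2 + ((-7 : ℝ)/1296) * Real.exp (-s) ^ 3 * Real.cos β ^ 2 * Real.sin β ^ 4 * Real.exp s ^ 3 + ((-1 : ℝ)/48) * Real.exp (-s) ^ 3 * Real.cos β ^ 2 * Real.sin β ^ 6 + ((5 : ℝ)/144) * Real.exp (-s) ^ 3 * Real.cos β ^ 2 * Real.sin β ^ 6 * Real.exp s + ((-1 : ℝ)/54) * Real.exp (-s) ^ 3 * Real.cos β ^ 2 * Real.sin β ^ 6 * Real.exp s ^ 2 + ((1 : ℝ)/324) * Real.exp (-s) ^ 3 * Real.cos β ^ 2 * Real.sin β ^ 6 * Real.exp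 s ^ 3 + ((-7 : ℝ)/192) * Real.exp (-s) ^ 3 * Real.cos β ^ 4 + ((1 : ℝ)/16) * Real.exp (-s) ^ 3 * Real.cos β ^ 4 * Real.exp s + ((-5 : ℝ)/576) * Real.exp (-s) ^ 3 * Real.cos β ^ 4 * Real.exp s ^ 2 + ((-113 : ℝ)/5184) * Real.exp (-s) ^ 3 * Real.cos β ^ 4 * Real.exp s ^ 3 + ((5 : ℝ)/1296) * Real.exp (-s) ^ 3 * Real.cos β ^ 4 * Real.exp s ^ 5 + ((-1 : ℝ)/5184) * Real.exp (-s) ^ 3 * Real.cos β ^ 4 * Real.exp s ^ 7 + ((13 : ℝ)/96) * Real.exp (-s) ^ 3 * Real.cos β ^ 4 * Real.sin β ^ 2 + ((-1 : ℝ)/12) * Real.exp (-s) ^ 3 * Real.cos β ^ 4 * Real.sin β ^ 2 * Real.exp s + ((35 : ℝ)/864) * Real.exp (-s) ^ 3 * Real.cos β ^ 4 * Real.sin β ^ 2 * Real.exp s ^ 2 + ((35 : ℝ)/1296) * Real.exp (-s) ^ 3 * Real.cos β ^ 4 * Real.sin β ^ 2 * Real.exp s ^ 3 + ((1 : ℝ)/324)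 * Real.exp (-s) ^ 3 * Real.cos β ^ 4 * Real.sin β ^ 2 * Real.exp s ^ 5 + ((-1 : ℝ)/1296) * Real.exp (-s) ^ 3 * Real.cos β ^ 4 * Real.sin β ^ 2 * Real.exp s ^ 7 + ((-1 : ℝ)/8) * Real.exp (-s) ^ 3 * Real.cos β ^ 4 * Real.sin β ^ 4 + ((7 : ℝ)/72) * Real.exp (-s) ^ 3 * Real.cos β ^ 4 * Real.sin β ^ 4 * Real.exp s + ((-1 : ℝ)/27) * Real.exp (-s) ^ 3 * Real.cos β ^ 4 * Real.sin β ^ 4 * Real.exp s ^ 2 + ((1 : ℝ)/162) * Real.exp (-s) ^ 3 * Real.cos β ^ 4 * Real.sin β ^ 4 * Real.exp s ^ 3 + ((1 : ℝ)/96) * Real.exp (-s) ^ 3 * Real.cos β ^ 6 + ((-1 : ℝ)/72) * Real.exp (-s) ^ 3 * Real.cos β ^ 6 * Real.exp s + ((5 : ℝ)/864) * Real.exp (-s) ^ 3 * Real.cos β ^ 6 * Real.exp s ^ 2 + ((-1 : ℝ)/1296) * Real.exp (-s) ^ 3 * Real.cos β ^ 6 * Real.exp s ^ 3 + ((-1 :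 ℝ)/48) * Real.exp (-s) ^ 3 * Real.cos β ^ 6 * Real.sin β ^ 2 + ((1 : ℝ)/144) * Real.exp (-s) ^ 3 * Real.cos β ^ 6 * Real.sin β ^ 2 * Real.exp s + ((-1 : ℝ)/54) * Real.exp (-s) ^ 3 * Real.cos β ^ 6 * Real.sin β ^ 2 * Real.exp s ^ 2 + ((-19 : ℝ)/648) * Real.exp (-s) ^ 3 * Real.cos β ^ 6 * Real.sin β ^ 2 * Real.exp s ^ 3 + ((-1 : ℝ)/324) * Real.exp (-s) ^ 3 * Real.cos β ^ 6 * Real.sin β ^ 2 * Real.exp s ^ 5 + ((1 : ℝ)/1296) * Real.exp (-s) ^ 3 * Real.cos β ^ 6 * Real.sin β ^ 2 * Real.exp s ^ 7) * h2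
  refine ⟨hdet, ?_, ?_⟩
  · have hx1 : (1 : ℝ) ≤ Real.exp (2 * s) := by
      rw [← Real.exp_zero]; exact Real.exp_le_exp.mpr (by linarith)
    have hx9 : Real.exp (2 * s) ≤ 9 := by
      have h := Real.exp_le_exp.mpr (show 2 * s ≤ 2 * Real.log 3 by linarith)
      have : Real.exp (2 * Real.log 3) = 9 := by
        rw [show (2 : ℝ) * Real.log 3 = ((2 : ℕ) * Real.log 3) by push_cast; ring,
          Real.exp_nat_mul, Real.exp_log] <;> norm_num
      linarith
    simp only [fAux, E4, E5]
    nlinarith [mul_nonneg (sub_nonneg.2 hx1) (sub_nonneg.2 hx9), E4]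
  · rw [hdet]
    have hf : fAux s ≤ 0 := by
      have hx1 : (1 : ℝ) ≤ Real.exp (2 * s) := by
        rw [← Real.exp_zero]; exact Real.exp_le_exp.mpr (by linarith)
      have hx9 : Real.exp (2 * s) ≤ 9 := by
        have h := Real.exp_le_exp.mpr (show 2 * s ≤ 2 * Real.log 3 by linarith)
        have : Real.exp (2 * Real.log 3) = 9 := by
          rw [show (2 : ℝ) * Real.log 3 = ((2 : ℕ) * Real.log 3) by push_cast; ring,
            Real.exp_nat_mul, Real.exp_log] <;> norm_num
        linarith
      simp only [fAux, E4, E5]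
      nlinarith [mul_nonneg (sub_nonneg.2 hx1) (sub_nonneg.2 hx9), E4]
    have hb : 0 ≤ (fAux s) ^ 2 - fAux s * (3 + Real.exp (2 * s)) ^ 2 * Real.sin (2 * β) ^ 2 := by
      nlinarith [sq_nonneg (fAux s), sq_nonneg (3 + Real.exp (2 * s)), sq_nonneg (Real.sin (2 * β)),
        mul_nonneg (mul_nonneg (neg_nonneg.2 hf) (sq_nonneg (3 + Real.exp (2 * s)))) (sq_nonneg (Real.sin (2 * β)))]
    have ha : 0 ≤ Real.exp (-(4 * s)) * Real.cos (2 * β) ^ 2 / 20736 := by positivity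
    exact mul_nonneg ha hb
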